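/- arXiv:2305.06855 — 2 statements merged into one kernel-verified Lean document; each statement's English description precedes it below -/
import Mathlib

section
/- MED does not imply weak monotonicity: there exists λ ∈ (0,1) such that the two-qubit state ρ_λ = λ|ψ⁻⟩⟨ψ⁻| + (1−λ)𝟙/4 satisfies −1/2 ≤ S(2|1)_{ρ_λ} < 0. Consequently, assigning ρ_{ij} = ρ_λ to every pair ij of three sites yields a pairwise locally consistent family that violates every weak monotonicity inequality S(i|j) + S(i|k) ≥ 0 for distinct i,j,k ∈ {1,2,3}, while satisfying all 2-body MED inequalities: S(i) + S(j|i) + S(k|j) ≥ 0 and S(i) + S(j|i) + S(k|i) ≥ 0 for all distinct i,j,k ∈ {1,2,3}. -/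
open scoped Matrix Kronecker ComplexOrder

noncomputable section

def IsDensityOp {n : Type*} [Fintype n] [DecidableEq n] (ρ : Matrix n n ℂ) : Prop :=
  ρ.PosSemidef ∧ ρ.trace = 1

/-- Von Neumann entropy of a (Hermitian) matrix: `-∑ λᵢ log λᵢ`. -/
noncomputable def vNE {n : Type*} [Fintype n] [DecidableEq n] (ρ : Matrix n n ℂ) : ℝ :=
  if h : ρ.IsHermitian then -∑ i, h.eigenvalues i * Real.log (h.eigenvalues i) else 0

/-- Partial trace over the first tensor factor. -/
noncomputable def ptraceL {a b : Type*} [Fintype a] [Fintype b]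
    (ρ : Matrix (a × b) (a × b) ℂ) : Matrix b b ℂ :=
  Matrix.of fun i j => ∑ k : a, ρ (k, i) (k, j)

/-- Partial trace over the second tensor factor. -/
noncomputable def ptraceR {a b : Type*} [Fintype a] [Fintype b]
    (ρ : Matrix (a × b) (a × b) ℂ) : Matrix a a ℂ :=
  Matrix.of fun i j => ∑ k : b, ρ (i, k) (j, k)

end
noncomputable section

/-- The two-qubit singlet state `|ψ⁻⟩ = (|01⟩ - |10⟩)/√2`. -/
noncomputable def psiMinus : Fin 2 × Fin 2 → ℂ :=
  fun p => if p = (0, 1) then (Real.sqrt 2 : ℂ)⁻¹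
    else if p = (1, 0) then -(Real.sqrt 2 : ℂ)⁻¹ else 0

/-- The rank-one projector `|ψ⁻⟩⟨ψ⁻|` onto the singlet state. -/
noncomputable def singletProj : Matrix (Fin 2 × Fin 2) (Fin 2 × Fin 2) ℂ :=
  Matrix.of fun p q => psiMinus p * (starRingEnd ℂ) (psiMinus q)

/-- `ρ_λ = λ|ψ⁻⟩⟨ψ⁻| + (1-λ)𝟙/4`. -/
noncomputable def rhoLam (lam : ℝ) : Matrix (Fin 2 × Fin 2) (Fin 2 × Fin 2) ℂ :=
  (lam : ℂ) • singletProj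
    + ((1 - lam : ℝ) : ℂ) • ((1 / 4 : ℂ) • (1 : Matrix (Fin 2 × Fin 2) (Fin 2 × Fin 2) ℂ))

/-!
For `0 < λ ≤ 1` the state `ρ_λ = λ P + (1 - λ) 𝟙/4`, with `P` the singlet projector, satisfies
`(ρ_λ - a)(ρ_λ - b) = 0` for `a = (1 + 3λ)/4` and `b = (1 - λ)/4`, so its spectrum lies in
`{a, b}`; trace one forces the multiplicities `1` and `3`. Both marginals are `𝟙/2`, so
`S(2|1) = -a log a - 3 b log b - log 2`, which for `λ = 7/8` equals
`-(29/32) log (29/32) - (17/32) log 2 ∈ [-(log 2)/2, 0)`. All conditional entropies of the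
three-site family coincide, so weak monotonicity reads `2 S(2|1) ≥ 0` and fails, while MED
reads `log 2 + 2 S(2|1) ≥ 0` and holds.
-/

namespace Matrix.IsHermitian

variable {𝕜 n : Type*} [RCLike 𝕜] [Fintype n] [DecidableEq n] {A : Matrix n n 𝕜}

theorem eigenvalues_eq_or_eq_of_mul_eq_zero (hA : A.IsHermitian) {a b : ℝ}
    (h : (A - (a : 𝕜) • 1) * (A - (b : 𝕜) • 1) = 0) (i : n) :
    hA.eigenvalues i = a ∨ hA.eigenvalues i = b := by
  set v : n → 𝕜 := ⇑(hA.eigenvectorBasis i)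
  have hv : v ≠ 0 := (WithLp.ofLp_eq_zero 2).ne.2 (hA.eigenvectorBasis.orthonormal.ne_zero i)
  have hAv : A *ᵥ v = (hA.eigenvalues i : 𝕜) • v := by
    rw [hA.mulVec_eigenvectorBasis i, RCLike.real_smul_eq_coe_smul (K := 𝕜)]
  have hprod : (((hA.eigenvalues i - a) * (hA.eigenvalues i - b) : ℝ) : 𝕜) • v = 0 := by
    rw [← zero_mulVec v, ← h, ← mulVec_mulVec]
    simp only [sub_mulVec, smul_mulVec, one_mulVec, hAv, mulVec_sub, mulVec_smul]
    push_cast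
    module
  have := (smul_eq_zero.mp hprod).resolve_right hv
  norm_cast at this
  rcases mul_eq_zero.mp this with h | h
  · exact Or.inl (sub_eq_zero.mp h)
  · exact Or.inr (sub_eq_zero.mp h)

end Matrix.IsHermitian

theorem Fintype.sum_comp_eq_of_forall_eq_or_eq {ι : Type*} [Fintype ι] {e : ι → ℝ} {a b : ℝ}
    (hab : a ≠ b) (he : ∀ i, e i = a ∨ e i = b) {m : ℕ} (hcard : Fintype.card ι = m + 1)
    (hsum : ∑ i, e i = a + m * b) (f : ℝ → ℝ) : ∑ i, f (e i) = f a + m * f b := by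
  obtain ⟨β, hβ⟩ : ∃ β, β * (a - b) = f a - f b :=
    ⟨_, div_mul_cancel₀ _ (sub_ne_zero.mpr hab)⟩
  -- `f` agrees with its affine interpolant through `(a, f a)` and `(b, f b)` at every `e i`.
  have hf : ∀ i, f (e i) = (f b - β * b) + β * e i := by
    intro i
    rcases he i with h | h <;> rw [h]
    · linear_combination -hβ
    · ring
  simp only [hf, Finset.sum_add_distrib, Finset.sum_const, Finset.card_univ, hcard,
    ← Finset.mul_sum, hsum, nsmul_eq_mul]
  push_cast
  linear_combination hβ

section vonNeumannEntropy

variable {n : Type*} [Fintype n] [DecidableEq n]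

theorem vNE_eq_of_sub_mul_sub_eq_zero {ρ : Matrix n n ℂ} (hρ : ρ.IsHermitian) {a b : ℝ}
    (hab : a ≠ b) (h : (ρ - (a : ℂ) • 1) * (ρ - (b : ℂ) • 1) = 0) {m : ℕ}
    (hcard : Fintype.card n = m + 1) (htr : ρ.trace = a + m * b) :
    vNE ρ = -(a * Real.log a + m * (b * Real.log b)) := by
  have hsum : ∑ i, hρ.eigenvalues i = a + m * b := by
    apply Complex.ofReal_injective
    push_cast
    rw [← htr, hρ.trace_eq_sum_eigenvalues]
    rfl
  rw [vNE, dif_pos hρ, Fintype.sum_comp_eq_of_forall_eq_or_eq hab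
    (hρ.eigenvalues_eq_or_eq_of_mul_eq_zero h) hcard hsum fun x => x * Real.log x]

theorem vNE_smul_one (c : ℝ) :
    vNE ((c : ℂ) • (1 : Matrix n n ℂ)) = -(Fintype.card n * (c * Real.log c)) := by
  have hc : ((c : ℂ) • (1 : Matrix n n ℂ)).IsHermitian := by
    simp [Matrix.IsHermitian, Matrix.conjTranspose_smul]
  have heig (i : n) : hc.eigenvalues i = c :=
    (hc.eigenvalues_eq_or_eq_of_mul_eq_zero (a := c) (b := c) (by simp) i).elim id id
  rw [vNE, dif_pos hc]
  simp [heig]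

end vonNeumannEntropy

theorem ptraceL_eq_ptraceR_of_swap {a : Type*} [Fintype a] {ρ : Matrix (a × a) (a × a) ℂ}
    (h : (Matrix.of fun p q => ρ p.swap q.swap) = ρ) : ptraceL ρ = ptraceR ρ := by
  ext i j
  conv_lhs => rw [← h]
  rfl

theorem singletProj_eq_vecMulVec : singletProj = Matrix.vecMulVec psiMinus (star psiMinus) := rfl

theorem inv_sqrt_two_mul_self : ((Real.sqrt 2 : ℂ))⁻¹ * ((Real.sqrt 2 : ℂ))⁻¹ = 2⁻¹ := by
  rw [← mul_inv, ← Complex.ofReal_mul, Real.mul_self_sqrt zero_le_two, Complex.ofReal_ofNat]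

theorem star_psiMinus_dotProduct_psiMinus : star psiMinus ⬝ᵥ psiMinus = 1 := by
  norm_num [dotProduct, Fintype.sum_prod_type, psiMinus, Prod.ext_iff, inv_sqrt_two_mul_self]

theorem singletProj_mul_self : singletProj * singletProj = singletProj := by
  rw [singletProj_eq_vecMulVec, Matrix.vecMulVec_mul_vecMulVec,
    star_psiMinus_dotProduct_psiMinus, one_smul]

theorem trace_singletProj : singletProj.trace = 1 := by
  rw [singletProj_eq_vecMulVec, Matrix.trace_vecMulVec, dotProduct_comm,
    star_psiMinus_dotProduct_psiMinus]

theorem singletProj_posSemidef : singletProj.PosSemidef :=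
  Matrix.posSemidef_vecMulVec_self_star psiMinus

theorem rhoLam_posSemidef {lam : ℝ} (h0 : 0 ≤ lam) (h1 : lam ≤ 1) : (rhoLam lam).PosSemidef :=
  (singletProj_posSemidef.smul (Complex.zero_le_real.mpr h0)).add <|
    (Matrix.PosSemidef.one.smul (by positivity)).smul
      (Complex.zero_le_real.mpr (sub_nonneg.mpr h1))

theorem trace_rhoLam (lam : ℝ) : (rhoLam lam).trace = 1 := by
  simp only [rhoLam, Matrix.trace_add, Matrix.trace_smul, trace_singletProj, Matrix.trace_one,
    Fintype.card_prod, Fintype.card_fin]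
  push_cast
  ring

theorem rhoLam_sub_mul_sub (lam : ℝ) :
    (rhoLam lam - (((1 + 3 * lam) / 4 : ℝ) : ℂ) • 1) * (rhoLam lam - (((1 - lam) / 4 : ℝ) : ℂ) • 1)
      = 0 := by
  have ha : rhoLam lam - (((1 + 3 * lam) / 4 : ℝ) : ℂ) • 1 = (lam : ℂ) • (singletProj - 1) := by
    simp only [rhoLam]; push_cast; module
  have hb : rhoLam lam - (((1 - lam) / 4 : ℝ) : ℂ) • 1 = (lam : ℂ) • singletProj := by
    simp only [rhoLam]; push_cast; module
  rw [ha, hb, Matrix.smul_mul, Matrix.mul_smul, Matrix.sub_mul, singletProj_mul_self, one_mul,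
    sub_self, smul_zero, smul_zero]

theorem vNE_rhoLam {lam : ℝ} (h0 : 0 < lam) (h1 : lam ≤ 1) :
    vNE (rhoLam lam) = -((1 + 3 * lam) / 4 * Real.log ((1 + 3 * lam) / 4)
      + 3 * ((1 - lam) / 4 * Real.log ((1 - lam) / 4))) := by
  have := vNE_eq_of_sub_mul_sub_eq_zero (rhoLam_posSemidef h0.le h1).1 (by linarith)
    (rhoLam_sub_mul_sub lam) (m := 3) rfl (by rw [trace_rhoLam]; push_cast; ring)
  exact_mod_cast this

theorem rhoLam_swap (lam : ℝ) : (Matrix.of fun p q => rhoLam lam p.swap q.swap) = rhoLam lam := by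
  ext ⟨i, j⟩ ⟨k, l⟩
  fin_cases i <;> fin_cases j <;> fin_cases k <;> fin_cases l <;>
    simp [rhoLam, singletProj, psiMinus, Prod.ext_iff, Matrix.one_apply]

theorem ptraceR_rhoLam (lam : ℝ) : ptraceR (rhoLam lam) = ((1 / 2 : ℝ) : ℂ) • 1 := by
  ext i j
  fin_cases i <;> fin_cases j <;>
    simp [ptraceR, rhoLam, singletProj, psiMinus, Prod.ext_iff, Matrix.one_apply,
      inv_sqrt_two_mul_self] <;>
    ring

theorem vNE_rhoLam_seven_eighths_bounds :
    Real.log 2 / 2 ≤ vNE (rhoLam (7 / 8)) ∧ vNE (rhoLam (7 / 8)) < Real.log 2 := by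
  rw [vNE_rhoLam (by norm_num) (by norm_num),
    show (1 + 3 * (7 / 8)) / 4 = (29 / 32 : ℝ) by norm_num,
    show (1 - 7 / 8) / 4 = ((2 : ℝ) ^ 5)⁻¹ by norm_num, Real.log_inv, Real.log_pow]
  have hlog_le : Real.log (29 / 32) ≤ -(3 / 32) := by
    linarith [Real.log_le_sub_one_of_pos (x := 29 / 32) (by norm_num)]
  have hlog_ge : -(3 / 29) ≤ Real.log (29 / 32) := by
    linarith [Real.one_sub_inv_le_log_of_pos (x := 29 / 32) (by norm_num)]
  have hlog_two_gt := Real.log_two_gt_d9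
  have hlog_two_lt := Real.log_two_lt_d9
  constructor <;> push_cast <;> linarith

theorem vNE_ptraceR_rhoLam (lam : ℝ) : vNE (ptraceR (rhoLam lam)) = Real.log 2 := by
  rw [ptraceR_rhoLam, vNE_smul_one, Fintype.card_fin, one_div, Real.log_inv]
  push_cast
  ring

/-- **MED does not imply weak monotonicity**: there is `λ ∈ (0,1)` with
`-1/2 ≤ S(2|1)_{ρ_λ} < 0` for `ρ_λ = λ|ψ⁻⟩⟨ψ⁻| + (1-λ)𝟙/4`; assigning `ρ_λ` to every pair of
three sites gives a locally consistent family of density operators (`ρ_λ` is swap symmetric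
with both one-body marginals equal) that violates every weak monotonicity inequality
`S(i|j) + S(i|k) ≥ 0` while satisfying all 2-body MED inequalities
`S(i) + S(j|i) + S(k|j) ≥ 0` and `S(i) + S(j|i) + S(k|i) ≥ 0`. -/
theorem MED_does_not_imply_weak_monotonicity :
    ∃ lam : ℝ, 0 < lam ∧ lam < 1 ∧
      (-(1 / 2) ≤ vNE (rhoLam lam) - vNE (ptraceR (rhoLam lam))
        ∧ vNE (rhoLam lam) - vNE (ptraceR (rhoLam lam)) < 0) ∧
      IsDensityOp (rhoLam lam) ∧
      (Matrix.of fun p q => rhoLam lam p.swap q.swap) = rhoLam lam ∧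
      ptraceL (rhoLam lam) = ptraceR (rhoLam lam) ∧
      ((vNE (rhoLam lam) - vNE (ptraceL (rhoLam lam)))
          + (vNE (rhoLam lam) - vNE (ptraceL (rhoLam lam))) < 0) ∧
      (0 ≤ vNE (ptraceR (rhoLam lam)) + (vNE (rhoLam lam) - vNE (ptraceR (rhoLam lam)))
          + (vNE (rhoLam lam) - vNE (ptraceR (rhoLam lam)))) := by
  obtain ⟨hlower, hupper⟩ := vNE_rhoLam_seven_eighths_bounds
  have hmarg := ptraceL_eq_ptraceR_of_swap (rhoLam_swap (7 / 8))
  have hR := vNE_ptraceR_rhoLam (7 / 8)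
  have hL : vNE (ptraceL (rhoLam (7 / 8))) = Real.log 2 := hmarg ▸ hR
  have hlog_two_lt := Real.log_two_lt_d9
  refine ⟨7 / 8, by norm_num, by norm_num, ⟨by linarith, by linarith⟩,
    ⟨rhoLam_posSemidef (by norm_num) (by norm_num), trace_rhoLam _⟩, rhoLam_swap _, hmarg,
    by linarith, by linarith⟩
end
end

section
/- On three sites, the 2-body weak monotonicity constraints imply all 2-body MED constraints: let ρ_{12}, ρ_{13}, ρ_{23} be density operators on ℂ^d⊗ℂ^d that are pairwise locally consistent (the one-body marginal at each site is the same across all pairs containing it). If S(i|j) + S(i|k) ≥ 0 for all distinct i,j,k ∈ {1,2,3}, then S(i) + S(j|i) + S(k|j) ≥ 0 and S(i) + S(j|i) + S(k|i) ≥ 0 for all distinct i,j,k ∈ {1,2,3}. -/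
open scoped Matrix Kronecker ComplexOrder

/-!
Write `S i` for the entropy of the (common) one-body marginal at site `i` and `S i j` for the
entropy of `ρ i j`. Then `S(i) + S(j|i) + S(k|j) = S i j + S j k - S j` is half the sum of the
three weak-monotonicity quantities plus `S i + S k - S i k`, which is nonnegative by
subadditivity of the von Neumann entropy; the second bound is the first with `i` and `j`
exchanged.

Subadditivity reduces to Shannon entropy. Let `P`, `U`, `V` diagonalize `ρ` and its two
marginals, with spectra `λ`, `α`, `β`. The diagonal `r` of `(U ⊗ V)ᴴ ρ (U ⊗ V)` has marginals
`α` and `β`, and `r = λ ᵥ* M` for the doubly stochastic matrix `M = |Pᴴ (U ⊗ V)|²`. Hence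
`H(λ) ≤ H(r)` by concavity of `x ↦ -x log x`, and `H(r) ≤ H(α) + H(β)` by Gibbs' inequality.
-/

open Finset Matrix Real

theorem sum_negMulLog_le_sum_negMulLog_vecMul {ι : Type*} [Fintype ι] [DecidableEq ι]
    {p : ι → ℝ} (hp : 0 ≤ p) {M : Matrix ι ι ℝ} (hM : M ∈ doublyStochastic ℝ ι) :
    ∑ i, negMulLog (p i) ≤ ∑ j, negMulLog ((p ᵥ* M) j) := by
  obtain ⟨hM0, hrow, hcol⟩ := mem_doublyStochastic_iff_sum.mp hM
  calc ∑ i, negMulLog (p i) = ∑ j, ∑ i, M i j • negMulLog (p i) := by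
        rw [Finset.sum_comm]
        simp only [smul_eq_mul, ← Finset.sum_mul, hrow, one_mul]
    _ ≤ ∑ j, negMulLog ((p ᵥ* M) j) := by
        refine Finset.sum_le_sum fun j _ => ?_
        have := concaveOn_negMulLog.le_map_sum (t := univ) (w := fun i => M i j) (p := p)
          (fun i _ => hM0 i j) (hcol j) (fun i _ => hp i)
        simpa [vecMul, dotProduct, mul_comm] using this

theorem sub_mul_le_mul_log_sub {r a b : ℝ} (hr : 0 ≤ r) (ha : r ≤ a) (hb : r ≤ b) :
    r - a * b ≤ r * (log r - log a - log b) := by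
  rcases hr.eq_or_lt with rfl | hr
  · simpa using mul_nonneg (hr.trans ha) (hr.trans hb)
  have hab : 0 < a * b := mul_pos (hr.trans_le ha) (hr.trans_le hb)
  have key := one_sub_inv_le_log_of_pos (div_pos hr hab)
  rw [log_div hr.ne' hab.ne', log_mul (hr.trans_le ha).ne' (hr.trans_le hb).ne', inv_div] at key
  have : r * (1 - a * b / r) = r - a * b := by field_simp
  nlinarith

theorem sum_negMulLog_le_sum_negMulLog_marginals {α β : Type*} [Fintype α] [Fintype β]
    {r : α × β → ℝ} (hr : 0 ≤ r) (hsum : ∑ z, r z = 1) :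
    ∑ z, negMulLog (r z) ≤ ∑ x, negMulLog (∑ y, r (x, y)) + ∑ y, negMulLog (∑ x, r (x, y)) := by
  set A : α → ℝ := fun x => ∑ y, r (x, y)
  set B : β → ℝ := fun y => ∑ x, r (x, y)
  have hA : ∀ z : α × β, r z ≤ A z.1 := fun z =>
    Finset.single_le_sum (f := fun y => r (z.1, y)) (fun y _ => hr _) (mem_univ z.2)
  have hB : ∀ z : α × β, r z ≤ B z.2 := fun z =>
    Finset.single_le_sum (f := fun x => r (x, z.2)) (fun x _ => hr _) (mem_univ z.1)
  have hAB : ∑ z : α × β, A z.1 * B z.2 = 1 := by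
    rw [Fintype.sum_prod_type, ← Finset.sum_mul_sum]
    simp only [A, B, ← Fintype.sum_prod_type, ← Fintype.sum_prod_type_right, hsum, one_mul]
  have hnegA : ∑ x, negMulLog (A x) = -∑ z : α × β, r z * log (A z.1) := by
    simp only [negMulLog, Fintype.sum_prod_type, ← Finset.sum_mul, A, Finset.sum_neg_distrib,
      neg_mul]
  have hnegB : ∑ y, negMulLog (B y) = -∑ z : α × β, r z * log (B z.2) := by
    simp only [negMulLog, Fintype.sum_prod_type_right, ← Finset.sum_mul, B,
      Finset.sum_neg_distrib, neg_mul]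
  have gibbs := Finset.sum_le_sum fun z (_ : z ∈ univ) =>
    sub_mul_le_mul_log_sub (hr z) (hA z) (hB z)
  simp only [Finset.sum_sub_distrib, hsum, hAB, mul_sub] at gibbs
  change _ ≤ ∑ x, negMulLog (A x) + ∑ y, negMulLog (B y)
  rw [hnegA, hnegB]
  simp only [negMulLog, neg_mul, Finset.sum_neg_distrib]
  linarith

section

variable {n m : Type*} [Fintype n] [DecidableEq n] [Fintype m] [DecidableEq m]

theorem vNE_eq_sum_negMulLog {A : Matrix n n ℂ} (hA : A.IsHermitian) :
    vNE A = ∑ i, negMulLog (hA.eigenvalues i) := by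
  simp [vNE, hA, negMulLog]

theorem vNE_eq_sum_roots_charpoly {A : Matrix n n ℂ} (hA : A.IsHermitian) :
    vNE A = (A.charpoly.roots.map fun z => negMulLog z.re).sum := by
  simp [vNE_eq_sum_negMulLog hA, hA.roots_charpoly_eq_eigenvalues]

theorem vNE_reindex (e : m ≃ n) (A : Matrix m m ℂ) : vNE (reindex e e A) = vNE A := by
  by_cases hA : A.IsHermitian
  · have hA' : (reindex e e A).IsHermitian := hA.submatrix _
    rw [vNE_eq_sum_roots_charpoly hA, vNE_eq_sum_roots_charpoly hA', charpoly_reindex]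
  · have : ¬(reindex e e A).IsHermitian := by
      simpa [reindex_apply, isHermitian_submatrix_equiv] using hA
    simp only [vNE, dif_neg hA, dif_neg this]

theorem normSq_mem_doublyStochastic {W : Matrix n n ℂ} (hW : W ∈ unitary (Matrix n n ℂ)) :
    (of fun i j => Complex.normSq (W i j)) ∈ doublyStochastic ℝ n := by
  rw [mem_doublyStochastic_iff_sum]
  refine ⟨fun i j => Complex.normSq_nonneg _, fun i => ?_, fun j => ?_⟩
  · have := congrArg (fun M => M i i) (Unitary.mul_star_self_of_mem hW)
    simp only [mul_apply, star_apply, RCLike.star_def, Complex.mul_conj, one_apply_eq] at this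
    exact_mod_cast this
  · have := congrArg (fun M => M j j) (Unitary.star_mul_self_of_mem hW)
    simp only [mul_apply, star_apply, RCLike.star_def, mul_comm (starRingEnd ℂ _),
      Complex.mul_conj, one_apply_eq] at this
    exact_mod_cast this

theorem conjTranspose_mul_diagonal_mul_apply_self (W : Matrix n n ℂ) (d : n → ℝ) (z : n) :
    (Wᴴ * diagonal (fun i => (d i : ℂ)) * W) z z =
      ((d ᵥ* of fun i j => Complex.normSq (W i j)) z : ℝ) := by
  simp [mul_apply, diagonal, vecMul, dotProduct, Complex.normSq_eq_conj_mul_self, mul_comm,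
    mul_left_comm]

end

section

variable {a b : Type*} [Fintype a] [Fintype b]

theorem ptraceL_of_swap (σ : Matrix (a × b) (a × b) ℂ) :
    ptraceL (of fun p q : b × a => σ p.swap q.swap) = ptraceR σ := rfl

theorem vNE_of_swap [DecidableEq a] [DecidableEq b] (σ : Matrix (a × b) (a × b) ℂ) :
    vNE (of fun p q : b × a => σ p.swap q.swap) = vNE σ :=
  vNE_reindex (Equiv.prodComm a b) σ

theorem Matrix.IsHermitian.ptraceR {ρ : Matrix (a × b) (a × b) ℂ} (h : ρ.IsHermitian) :
    (ptraceR ρ).IsHermitian := by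
  ext i j
  simp only [conjTranspose_apply, _root_.ptraceR, of_apply, star_sum, h.apply]

theorem Matrix.IsHermitian.ptraceL {ρ : Matrix (a × b) (a × b) ℂ} (h : ρ.IsHermitian) :
    (ptraceL ρ).IsHermitian := by
  ext i j
  simp only [conjTranspose_apply, _root_.ptraceL, of_apply, star_sum, h.apply]

theorem ptraceR_kronecker_one_mul [DecidableEq b] (U : Matrix a a ℂ)
    (X : Matrix (a × b) (a × b) ℂ) :
    ptraceR ((U ⊗ₖ (1 : Matrix b b ℂ)) * X) = U * ptraceR X := by
  ext x x'
  simpa [ptraceR, mul_apply, Fintype.sum_prod_type, one_apply, Finset.mul_sum] using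
    Finset.sum_comm

theorem ptraceR_mul_kronecker_one [DecidableEq b] (X : Matrix (a × b) (a × b) ℂ)
    (U : Matrix a a ℂ) :
    ptraceR (X * (U ⊗ₖ (1 : Matrix b b ℂ))) = ptraceR X * U := by
  ext x x'
  simpa [ptraceR, mul_apply, Fintype.sum_prod_type, one_apply, Finset.sum_mul] using
    Finset.sum_comm

theorem ptraceR_mul_one_kronecker_comm [DecidableEq a] (X : Matrix (a × b) (a × b) ℂ)
    (V : Matrix b b ℂ) :
    ptraceR (X * ((1 : Matrix a a ℂ) ⊗ₖ V)) = ptraceR ((1 ⊗ₖ V) * X) := by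
  ext x x'
  simpa [ptraceR, mul_apply, Fintype.sum_prod_type, one_apply, mul_comm] using Finset.sum_comm

theorem ptraceL_one_kronecker_mul [DecidableEq a] (V : Matrix b b ℂ)
    (X : Matrix (a × b) (a × b) ℂ) :
    ptraceL (((1 : Matrix a a ℂ) ⊗ₖ V) * X) = V * ptraceL X := by
  ext x x'
  simpa [ptraceL, mul_apply, Fintype.sum_prod_type, one_apply, Finset.mul_sum] using
    Finset.sum_comm

theorem ptraceL_mul_one_kronecker [DecidableEq a] (X : Matrix (a × b) (a × b) ℂ)
    (V : Matrix b b ℂ) :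
    ptraceL (X * ((1 : Matrix a a ℂ) ⊗ₖ V)) = ptraceL X * V := by
  ext x x'
  simpa [ptraceL, mul_apply, Fintype.sum_prod_type, one_apply, Finset.sum_mul] using
    Finset.sum_comm

theorem ptraceL_mul_kronecker_one_comm [DecidableEq b] (X : Matrix (a × b) (a × b) ℂ)
    (U : Matrix a a ℂ) :
    ptraceL (X * (U ⊗ₖ (1 : Matrix b b ℂ))) = ptraceL ((U ⊗ₖ 1) * X) := by
  ext x x'
  simpa [ptraceL, mul_apply, Fintype.sum_prod_type, one_apply, mul_comm] using Finset.sum_comm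

theorem ptraceR_conj_kronecker [DecidableEq a] [DecidableEq b] (ρ : Matrix (a × b) (a × b) ℂ)
    (U : Matrix a a ℂ) {V : Matrix b b ℂ} (hV : V ∈ unitary (Matrix b b ℂ)) :
    ptraceR ((U ⊗ₖ V)ᴴ * ρ * (U ⊗ₖ V)) = Uᴴ * ptraceR ρ * U := by
  have hK : U ⊗ₖ V = (1 ⊗ₖ V) * (U ⊗ₖ 1) := by rw [← mul_kronecker_mul, one_mul, mul_one]
  have hKH : (U ⊗ₖ V)ᴴ = (Uᴴ ⊗ₖ 1) * (1 ⊗ₖ Vᴴ) := by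
    rw [conjTranspose_kronecker, ← mul_kronecker_mul, one_mul, mul_one]
  have hVV : (1 : Matrix a a ℂ) ⊗ₖ V * (1 ⊗ₖ Vᴴ) = 1 := by
    rw [← mul_kronecker_mul, one_mul, ← star_eq_conjTranspose, Unitary.mul_star_self_of_mem hV,
      one_kronecker_one]
  rw [hKH, hK, ← Matrix.mul_assoc, Matrix.mul_assoc _ _ ρ, Matrix.mul_assoc _ _ (1 ⊗ₖ V),
    ptraceR_mul_kronecker_one, ptraceR_kronecker_one_mul, ptraceR_mul_one_kronecker_comm,
    ← Matrix.mul_assoc, hVV, Matrix.one_mul]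

theorem ptraceL_conj_kronecker [DecidableEq a] [DecidableEq b] (ρ : Matrix (a × b) (a × b) ℂ)
    {U : Matrix a a ℂ} (hU : U ∈ unitary (Matrix a a ℂ)) (V : Matrix b b ℂ) :
    ptraceL ((U ⊗ₖ V)ᴴ * ρ * (U ⊗ₖ V)) = Vᴴ * ptraceL ρ * V := by
  have hKH : (U ⊗ₖ V)ᴴ = (1 ⊗ₖ Vᴴ) * (Uᴴ ⊗ₖ 1) := by
    rw [conjTranspose_kronecker, ← mul_kronecker_mul, one_mul, mul_one]
  have hK : U ⊗ₖ V = (U ⊗ₖ 1) * (1 ⊗ₖ V) := by rw [← mul_kronecker_mul, one_mul, mul_one]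
  have hUU : U ⊗ₖ (1 : Matrix b b ℂ) * (Uᴴ ⊗ₖ 1) = 1 := by
    rw [← mul_kronecker_mul, one_mul, ← star_eq_conjTranspose, Unitary.mul_star_self_of_mem hU,
      one_kronecker_one]
  rw [hKH, hK, ← Matrix.mul_assoc, Matrix.mul_assoc _ _ ρ, Matrix.mul_assoc _ _ (U ⊗ₖ 1),
    ptraceL_mul_one_kronecker, ptraceL_one_kronecker_mul, ptraceL_mul_kronecker_one_comm,
    ← Matrix.mul_assoc, hUU, Matrix.one_mul]

end

theorem vNE_le_vNE_ptraceR_add_vNE_ptraceL {a b : Type*} [Fintype a] [DecidableEq a] [Fintype b]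
    [DecidableEq b] {ρ : Matrix (a × b) (a × b) ℂ} (hρ : IsDensityOp ρ) :
    vNE ρ ≤ vNE (ptraceR ρ) + vNE (ptraceL ρ) := by
  obtain ⟨hpsd, htr⟩ := hρ
  have hH := hpsd.isHermitian
  have hA := hH.ptraceR
  have hB := hH.ptraceL
  set P : Matrix (a × b) (a × b) ℂ := (hH.eigenvectorUnitary : Matrix (a × b) (a × b) ℂ)
  set U : Matrix a a ℂ := (hA.eigenvectorUnitary : Matrix a a ℂ)
  set V : Matrix b b ℂ := (hB.eigenvectorUnitary : Matrix b b ℂ)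
  have hU : U ∈ unitary (Matrix a a ℂ) := hA.eigenvectorUnitary.2
  have hV : V ∈ unitary (Matrix b b ℂ) := hB.eigenvectorUnitary.2
  set c := of fun i j => Complex.normSq ((star P * (U ⊗ₖ V)) i j)
  have hc : c ∈ doublyStochastic ℝ (a × b) := normSq_mem_doublyStochastic <|
    mul_mem (Unitary.star_mem hH.eigenvectorUnitary.2) (kronecker_mem_unitary hU hV)
  set r := hH.eigenvalues ᵥ* c
  have hdiag : ∀ z, ((U ⊗ₖ V)ᴴ * ρ * (U ⊗ₖ V)) z z = r z := by
    intro z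
    rw [← conjTranspose_mul_diagonal_mul_apply_self]
    conv_lhs => rw [hH.spectral_theorem]
    simp only [Unitary.conjStarAlgAut_apply, conjTranspose_mul, star_eq_conjTranspose,
      conjTranspose_conjTranspose, Matrix.mul_assoc]
    rfl
  have hmargA : ∀ x, ∑ y, r (x, y) = hA.eigenvalues x := by
    intro x
    have hUd : Uᴴ * ptraceR ρ * U = diagonal (RCLike.ofReal ∘ hA.eigenvalues) := by
      simpa [star_eq_conjTranspose] using hA.conjStarAlgAut_star_eigenvectorUnitary
    have h := congrArg (fun M => M x x) (ptraceR_conj_kronecker ρ U hV)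
    rw [hUd] at h
    simp only [_root_.ptraceR, of_apply, hdiag, diagonal_apply_eq, Function.comp_apply] at h
    exact Complex.ofReal_injective (by push_cast; exact h)
  have hmargB : ∀ y, ∑ x, r (x, y) = hB.eigenvalues y := by
    intro y
    have hVd : Vᴴ * ptraceL ρ * V = diagonal (RCLike.ofReal ∘ hB.eigenvalues) := by
      simpa [star_eq_conjTranspose] using hB.conjStarAlgAut_star_eigenvectorUnitary
    have h := congrArg (fun M => M y y) (ptraceL_conj_kronecker ρ hU V)
    rw [hVd] at h
    simp only [_root_.ptraceL, of_apply, hdiag, diagonal_apply_eq, Function.comp_apply] at h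
    exact Complex.ofReal_injective (by push_cast; exact h)
  have hp : 0 ≤ hH.eigenvalues := hpsd.eigenvalues_nonneg
  have hr : 0 ≤ r := fun z => Finset.sum_nonneg fun i _ => mul_nonneg (hp i) (hc.1 i z)
  have hsum : ∑ z, r z = 1 := by
    have htr' := hH.trace_eq_sum_eigenvalues
    rw [htr] at htr'
    rw [show r = cᵀ *ᵥ hH.eigenvalues from (mulVec_transpose c _).symm,
      sum_mulVec_of_mem_doublyStochastic (transpose_mem_doublyStochastic_iff.mpr hc)]
    simpa using (congrArg Complex.re htr').symm
  calc vNE ρ = ∑ i, negMulLog (hH.eigenvalues i) := vNE_eq_sum_negMulLog hH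
    _ ≤ ∑ z, negMulLog (r z) := sum_negMulLog_le_sum_negMulLog_vecMul hp hc
    _ ≤ ∑ x, negMulLog (∑ y, r (x, y)) + ∑ y, negMulLog (∑ x, r (x, y)) :=
        sum_negMulLog_le_sum_negMulLog_marginals hr hsum
    _ = vNE (ptraceR ρ) + vNE (ptraceL ρ) := by
        simp only [hmargA, hmargB, vNE_eq_sum_negMulLog hA, vNE_eq_sum_negMulLog hB]

theorem exists_common_marginals {ι a : Type*} [Fintype a]
    (ρ : ι → ι → Matrix (a × a) (a × a) ℂ)
    (hsym : ∀ i j, i ≠ j → ρ j i = of fun p q => ρ i j p.swap q.swap)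
    (hcons : ∀ i j k, i ≠ j → i ≠ k → ptraceR (ρ i j) = ptraceR (ρ i k)) :
    ∃ σ : ι → Matrix a a ℂ,
      (∀ i j, i ≠ j → ptraceR (ρ i j) = σ i) ∧ ∀ i j, i ≠ j → ptraceL (ρ i j) = σ j := by
  classical
  refine ⟨fun i => if h : ∃ j, i ≠ j then ptraceR (ρ i h.choose) else 0,
    fun i j hij => ?_, fun i j hij => ?_⟩
  · have h : ∃ j, i ≠ j := ⟨j, hij⟩
    dsimp only
    rw [dif_pos h]
    exact hcons i j _ hij h.choose_spec
  · have h : ∃ k, j ≠ k := ⟨i, hij.symm⟩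
    dsimp only
    rw [dif_pos h, hsym j i hij.symm, ptraceL_of_swap]
    exact hcons j i _ hij.symm h.choose_spec

theorem wm_implies_med_three_sites_general {d : ℕ}
    (ρ : Fin 3 → Fin 3 → Matrix (Fin d × Fin d) (Fin d × Fin d) ℂ)
    (hdens : ∀ i j, i ≠ j → IsDensityOp (ρ i j))
    (hsym : ∀ i j, i ≠ j → ρ j i = Matrix.of fun p q => ρ i j p.swap q.swap)
    (hcons : ∀ i j k, i ≠ j → i ≠ k → ptraceR (ρ i j) = ptraceR (ρ i k))
    (hWM : ∀ i j k : Fin 3, i ≠ j → i ≠ k → j ≠ k →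
      0 ≤ (vNE (ρ i j) - vNE (ptraceL (ρ i j))) + (vNE (ρ i k) - vNE (ptraceL (ρ i k)))) :
    ∀ i j k : Fin 3, i ≠ j → i ≠ k → j ≠ k →
      (0 ≤ vNE (ptraceR (ρ i j)) + (vNE (ρ j i) - vNE (ptraceL (ρ j i)))
        + (vNE (ρ k j) - vNE (ptraceL (ρ k j))))
      ∧ (0 ≤ vNE (ptraceR (ρ i j)) + (vNE (ρ j i) - vNE (ptraceL (ρ j i)))
        + (vNE (ρ k i) - vNE (ptraceL (ρ k i)))) := by
  obtain ⟨σ, hR, hL⟩ := exists_common_marginals ρ hsym hcons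
  have hswap : ∀ i j, i ≠ j → vNE (ρ j i) = vNE (ρ i j) := fun i j h => by
    rw [hsym i j h, vNE_of_swap]
  have hSA : ∀ i j, i ≠ j → vNE (ρ i j) ≤ vNE (σ i) + vNE (σ j) := fun i j h => by
    simpa only [hR i j h, hL i j h] using vNE_le_vNE_ptraceR_add_vNE_ptraceL (hdens i j h)
  have hWM' : ∀ i j k, i ≠ j → i ≠ k → j ≠ k →
      vNE (σ j) + vNE (σ k) ≤ vNE (ρ i j) + vNE (ρ i k) := fun i j k hij hik hjk => by
    have := hWM i j k hij hik hjk
    rw [hL i j hij, hL i k hik] at this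
    linarith
  intro i j k hij hik hjk
  rw [hR i j hij, hL j i hij.symm, hL k j hjk.symm, hL k i hik.symm]
  have wm_i := hWM' i j k hij hik hjk
  have wm_j := hWM' j i k hij.symm hjk hik
  have wm_k := hWM' k i j hik.symm hjk.symm hij
  have swap_ij := hswap i j hij
  have swap_ik := hswap i k hik
  have swap_jk := hswap j k hjk
  exact ⟨by linarith [hSA i k hik], by linarith [hSA j k hjk]⟩

/-- **On three sites, 2-body weak monotonicity implies all 2-body MED constraints**: for a
pairwise locally consistent family of two-body density operators `ρ i j` on `ℂ^d ⊗ ℂ^d`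
(first factor: site `i`, second: site `j`, with swap symmetry), if `S(i|j) + S(i|k) ≥ 0` for
all distinct `i,j,k`, then `S(i) + S(j|i) + S(k|j) ≥ 0` and `S(i) + S(j|i) + S(k|i) ≥ 0`
for all distinct `i,j,k`. -/
theorem wm_implies_med_three_sites {d : ℕ} (hd : 0 < d)
    (ρ : Fin 3 → Fin 3 → Matrix (Fin d × Fin d) (Fin d × Fin d) ℂ)
    (hdens : ∀ i j, i ≠ j → IsDensityOp (ρ i j))
    (hsym : ∀ i j, i ≠ j → ρ j i = Matrix.of fun p q => ρ i j p.swap q.swap)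
    (hcons : ∀ i j k, i ≠ j → i ≠ k → ptraceR (ρ i j) = ptraceR (ρ i k))
    (hWM : ∀ i j k : Fin 3, i ≠ j → i ≠ k → j ≠ k →
      0 ≤ (vNE (ρ i j) - vNE (ptraceL (ρ i j))) + (vNE (ρ i k) - vNE (ptraceL (ρ i k)))) :
    ∀ i j k : Fin 3, i ≠ j → i ≠ k → j ≠ k →
      (0 ≤ vNE (ptraceR (ρ i j)) + (vNE (ρ j i) - vNE (ptraceL (ρ j i)))
        + (vNE (ρ k j) - vNE (ptraceL (ρ k j))))
      ∧ (0 ≤ vNE (ptraceR (ρ i j)) + (vNE (ρ j i) - vNE (ptraceL (ρ j i)))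
        + (vNE (ρ k i) - vNE (ptraceL (ρ k i)))) :=
  wm_implies_med_three_sites_general ρ hdens hsym hcons hWM
end
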